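/- arXiv:2007.10229 — 6 statements merged into one kernel-verified Lean document; each statement's English description precedes it below -/
import Mathlib

section
/- Let (X_s)_{s ∈ ℕ} be an integrable stochastic process adapted to a filtration (F_s) on a probability space, with X_s > 0 almost surely for every s, and suppose there is a constant c > 0 such that E[ X_{s+1} | F_s ] − X_s ≤ −c·X_s² almost surely for every s. Then X_s → 0 almost surely as s → ∞. -/
/-!
Taking expectations in the drift inequality gives `c 𝔼[X_s²] ≤ 𝔼[X_s] - 𝔼[X_{s+1}]`. Since
`X_s ≥ 0`, these differences telescope to at most `𝔼[X_0]`, so `∑ₛ 𝔼[c X_s²] < ∞`. By monotone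
convergence `∑ₛ c X_s² < ∞` almost surely, and hence `X_s → 0` almost surely.
-/

open MeasureTheory Filter Topology

theorem summable_of_le_sub_succ {a b : ℕ → ℝ} {B : ℝ} (ha : ∀ n, 0 ≤ a n)
    (hab : ∀ n, a n ≤ b n - b (n + 1)) (hb : ∀ n, B ≤ b n) : Summable a :=
  summable_of_sum_range_le ha fun n => calc
    ∑ i ∈ Finset.range n, a i ≤ ∑ i ∈ Finset.range n, (b i - b (i + 1)) :=
      Finset.sum_le_sum fun i _ => hab i
    _ = b 0 - b n := Finset.sum_range_sub' b n
    _ ≤ b 0 - B := by linarith [hb n]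

theorem tendsto_zero_of_tendsto_const_mul_sq {α : Type*} {l : Filter α} {u : α → ℝ} {c : ℝ}
    (hc : c ≠ 0) (h : Tendsto (fun n => c * u n ^ 2) l (𝓝 0)) : Tendsto u l (𝓝 0) := by
  have hsq : Tendsto (fun n => u n ^ 2) l (𝓝 0) := by
    simpa [inv_mul_cancel_left₀ hc] using h.const_mul c⁻¹
  rw [tendsto_zero_iff_abs_tendsto_zero]
  simpa [Function.comp_def, Real.sqrt_sq_eq_abs] using hsq.sqrt

section

variable {Ω : Type*} {m m0 : MeasurableSpace Ω} {μ : Measure Ω}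

theorem ae_summable_of_summable_integral {ι : Type*} [Countable ι] {f : ι → Ω → ℝ}
    (hf : ∀ i, Integrable (f i) μ) (hf0 : ∀ i, 0 ≤ᵐ[μ] f i)
    (hs : Summable fun i => ∫ ω, f i ω ∂μ) : ∀ᵐ ω ∂μ, Summable fun i => f i ω := by
  have hnorm : ∀ᵐ ω ∂μ, Summable fun i => ‖f i ω‖ := by
    refine summable_norm_of_tsum_eLpNorm_ne_top le_rfl (fun i => (hf i).1) ?_
    have heLp : ∀ i, eLpNorm (f i) 1 μ = ENNReal.ofReal (∫ ω, f i ω ∂μ) := fun i => by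
      rw [eLpNorm_one_eq_lintegral_enorm, ofReal_integral_eq_lintegral_ofReal (hf i) (hf0 i)]
      exact lintegral_congr_ae ((hf0 i).mono fun ω hω => Real.enorm_eq_ofReal hω)
    simp_rw [heLp, ← ENNReal.ofReal_tsum_of_nonneg (fun i => integral_nonneg_of_ae (hf0 i)) hs]
    exact ENNReal.ofReal_ne_top
  filter_upwards [hnorm] with ω hω using hω.of_norm

variable {f g h : Ω → ℝ}

theorem integrable_of_le_sub_condExp (hf : Integrable f μ) (hh : AEStronglyMeasurable h μ)
    (hh0 : 0 ≤ᵐ[μ] h) (hle : h ≤ᵐ[μ] f - μ[g|m]) : Integrable h μ :=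
  (hf.sub integrable_condExp).mono' hh <| by
    filter_upwards [hh0, hle] with ω hω0 hω
    rwa [Real.norm_of_nonneg hω0]

theorem integral_le_sub_of_le_sub_condExp (hm : m ≤ m0) [SigmaFinite (μ.trim hm)]
    (hf : Integrable f μ) (hh : Integrable h μ) (hle : h ≤ᵐ[μ] f - μ[g|m]) :
    ∫ ω, h ω ∂μ ≤ ∫ ω, f ω ∂μ - ∫ ω, g ω ∂μ := by
  rw [← integral_condExp hm (f := g), ← integral_sub hf integrable_condExp]
  exact integral_mono_ae hh (hf.sub integrable_condExp) hle

end

theorem drift_implies_as_convergence_to_zero_general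
    {Ω : Type*} {m : MeasurableSpace Ω} {μ : Measure Ω} [IsProbabilityMeasure μ]
    (ℱ : Filtration ℕ m) (X : ℕ → Ω → ℝ)
    (hint : ∀ s, Integrable (X s) μ)
    (hpos : ∀ s, ∀ᵐ ω ∂μ, 0 < X s ω)
    (c : ℝ) (hc : 0 < c)
    (hdrift : ∀ s, ∀ᵐ ω ∂μ, (μ[X (s + 1) | ℱ s]) ω - X s ω ≤ -c * (X s ω) ^ 2) :
    ∀ᵐ ω ∂μ, Tendsto (fun s => X s ω) atTop (nhds 0) := by
  set D : ℕ → Ω → ℝ := fun s ω => c * X s ω ^ 2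
  have hD0 : ∀ s, 0 ≤ᵐ[μ] D s := fun s => ae_of_all _ fun ω => by positivity
  have hD_le : ∀ s, D s ≤ᵐ[μ] X s - μ[X (s + 1) | ℱ s] := fun s => by
    filter_upwards [hdrift s] with ω hω
    simp only [D, Pi.sub_apply]
    linarith
  have hD_int : ∀ s, Integrable (D s) μ := fun s =>
    integrable_of_le_sub_condExp (hint s)
      (((hint s).aestronglyMeasurable.pow 2).const_mul c) (hD0 s) (hD_le s)
  have hD_sum : Summable fun s => ∫ ω, D s ω ∂μ :=
    summable_of_le_sub_succ (fun s => integral_nonneg_of_ae (hD0 s))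
      (fun s => integral_le_sub_of_le_sub_condExp (ℱ.le s) (hint s) (hD_int s) (hD_le s))
      (fun s => integral_nonneg_of_ae ((hpos s).mono fun ω hω => hω.le))
  filter_upwards [ae_summable_of_summable_integral hD_int hD0 hD_sum] with ω hω
  exact tendsto_zero_of_tendsto_const_mul_sq hc.ne' hω.tendsto_atTop_zero

/-- **Proposition (almost-sure convergence under a quadratic drift).**
Let `(X_s)` be an integrable process adapted to a filtration `(F_s)` on a
probability space, with `X_s > 0` a.s. for every `s`, and suppose there is a
constant `c > 0` with `E[X_{s+1} | F_s] − X_s ≤ −c·X_s²` a.s. for every `s`.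
Then `X_s → 0` almost surely. -/
theorem drift_implies_as_convergence_to_zero
    {Ω : Type*} {m : MeasurableSpace Ω} {μ : Measure Ω} [IsProbabilityMeasure μ]
    (ℱ : Filtration ℕ m) (X : ℕ → Ω → ℝ)
    (hadapt : ∀ s, StronglyMeasurable[ℱ s] (X s))
    (hint : ∀ s, Integrable (X s) μ)
    (hpos : ∀ s, ∀ᵐ ω ∂μ, 0 < X s ω)
    (c : ℝ) (hc : 0 < c)
    (hdrift : ∀ s, ∀ᵐ ω ∂μ, (μ[X (s + 1) | ℱ s]) ω - X s ω ≤ -c * (X s ω) ^ 2) :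
    ∀ᵐ ω ∂μ, Tendsto (fun s => X s ω) atTop (nhds 0) :=
  drift_implies_as_convergence_to_zero_general ℱ X hint hpos c hc hdrift
end

section
/- Let (X_s)_{s ∈ ℕ} be an integrable stochastic process adapted to a filtration (F_s) on a probability space, with X_s > 0 almost surely for every s, and suppose there is a constant c > 0 such that E[ X_{s+1} | F_s ] − X_s ≤ −c·X_s² almost surely for every s. Then for every s ∈ ℕ, E[X_s] ≤ E[X_0] / (1 + c·E[X_0]·s). In particular, if additionally X_0 ≤ 1/2 almost surely, then E[X_s] ≤ 1/(2 + c·s). -/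
/-!
Write `a s = E[X_s]`. Taking expectations in the drift inequality (tower property) and using
Jensen's inequality `E[X_s²] ≥ a_s²` gives the deterministic recursion `a_{s+1} ≤ a_s - c a_s²`,
with `a_s > 0`. Inverting, `1 / a_{s+1} ≥ 1 / (a_s (1 - c a_s)) ≥ 1 / a_s + c` because
`(1 - c a_s)(1 + c a_s) ≤ 1`, so `1 / a_s` grows at least linearly with slope `c`.
-/

open MeasureTheory

lemma inv_add_le_inv_sub_mul_sq {a c : ℝ} (h : 0 < a - c * a ^ 2) :
    a⁻¹ + c ≤ (a - c * a ^ 2)⁻¹ := by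
  have ha : a ≠ 0 := by
    rintro rfl
    simp at h
  have hprod : (a⁻¹ + c) * (a - c * a ^ 2) = 1 - (c * a) ^ 2 := by
    field_simp
    ring
  rw [← one_div (a - _), le_div_iff₀ h, hprod]
  exact sub_le_self _ (sq_nonneg _)

section Recursion

variable {a : ℕ → ℝ} {c : ℝ}

lemma inv_add_mul_le_inv_of_le_sub_mul_sq (hpos : ∀ n, 0 < a n)
    (hstep : ∀ n, a (n + 1) ≤ a n - c * a n ^ 2) (n : ℕ) : (a 0)⁻¹ + c * n ≤ (a n)⁻¹ := by
  induction n with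
  | zero => simp
  | succ n ih =>
    have hdiff : 0 < a n - c * a n ^ 2 := (hpos (n + 1)).trans_le (hstep n)
    calc (a 0)⁻¹ + c * ↑(n + 1) = ((a 0)⁻¹ + c * n) + c := by push_cast; ring
      _ ≤ (a n)⁻¹ + c := by gcongr
      _ ≤ (a n - c * a n ^ 2)⁻¹ := inv_add_le_inv_sub_mul_sq hdiff
      _ ≤ (a (n + 1))⁻¹ := inv_anti₀ (hpos (n + 1)) (hstep n)

lemma le_div_one_add_mul_of_le_sub_mul_sq (hc : 0 ≤ c) (hpos : ∀ n, 0 < a n)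
    (hstep : ∀ n, a (n + 1) ≤ a n - c * a n ^ 2) (n : ℕ) :
    a n ≤ a 0 / (1 + c * a 0 * n) := by
  have h0 := hpos 0
  have hden : 0 < (a 0)⁻¹ + c * n := by positivity
  calc a n ≤ ((a 0)⁻¹ + c * n)⁻¹ :=
        le_inv_of_le_inv₀ hden (inv_add_mul_le_inv_of_le_sub_mul_sq hpos hstep n)
    _ = a 0 / (1 + c * a 0 * n) := by field_simp

lemma le_one_div_add_mul_of_le_sub_mul_sq {b : ℝ} (hb : 0 < b) (hc : 0 ≤ c)
    (hpos : ∀ n, 0 < a n) (hstep : ∀ n, a (n + 1) ≤ a n - c * a n ^ 2) (h0 : a 0 ≤ 1 / b)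
    (n : ℕ) : a n ≤ 1 / (b + c * n) := by
  have hb0 : b ≤ (a 0)⁻¹ := by
    rw [le_inv_comm₀ hb (hpos 0), ← one_div]
    exact h0
  have hden : 0 < b + c * n := by positivity
  rw [one_div]
  refine le_inv_of_le_inv₀ hden ?_
  linarith [inv_add_mul_le_inv_of_le_sub_mul_sq hpos hstep n]

end Recursion

section Expectation

variable {Ω : Type*} {m₀ : MeasurableSpace Ω} {μ : Measure Ω}

lemma integral_pos_of_ae_pos [NeZero μ] {f : Ω → ℝ} (hf : Integrable f μ)
    (hpos : ∀ᵐ ω ∂μ, 0 < f ω) : 0 < ∫ ω, f ω ∂μ := by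
  rw [integral_pos_iff_support_of_nonneg_ae (hpos.mono fun _ h ↦ h.le) hf, pos_iff_ne_zero, Ne,
    Measure.measure_support_eq_zero_iff μ]
  intro hzero
  obtain ⟨ω, hω0, hωpos⟩ := (hzero.and hpos).exists
  exact hωpos.ne' hω0

lemma sq_integral_le_integral_sq [IsProbabilityMeasure μ] {f : Ω → ℝ} (hf : MemLp f 2 μ) :
    (∫ ω, f ω ∂μ) ^ 2 ≤ ∫ ω, f ω ^ 2 ∂μ := by
  have hvar := ProbabilityTheory.variance_nonneg f μ
  rw [ProbabilityTheory.variance_eq_sub hf] at hvar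
  simpa using hvar

lemma integrable_sq_of_sub_le_neg_mul_sq {f g : Ω → ℝ} {c : ℝ} (hc : 0 < c)
    (hf : Integrable f μ) (hg : Integrable g μ) (h : ∀ᵐ ω ∂μ, g ω - f ω ≤ -c * f ω ^ 2) :
    Integrable (fun ω ↦ f ω ^ 2) μ := by
  have hcf : Integrable (fun ω ↦ c * f ω ^ 2) μ := by
    refine (hf.sub hg).mono' (by fun_prop) ?_
    filter_upwards [h] with ω hω
    rw [Real.norm_of_nonneg (by positivity)]
    simp only [Pi.sub_apply]
    linarith
  simpa [hc.ne'] using hcf.const_mul c⁻¹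

lemma integral_le_integral_sub_mul_sq_integral [IsProbabilityMeasure μ] {m : MeasurableSpace Ω}
    (hm : m ≤ m₀) {f g : Ω → ℝ} {c : ℝ} (hc : 0 < c) (hf : Integrable f μ)
    (h : ∀ᵐ ω ∂μ, μ[g | m] ω - f ω ≤ -c * f ω ^ 2) :
    ∫ ω, g ω ∂μ ≤ ∫ ω, f ω ∂μ - c * (∫ ω, f ω ∂μ) ^ 2 := by
  have hsq := integrable_sq_of_sub_le_neg_mul_sq hc hf integrable_condExp h
  have hjensen := sq_integral_le_integral_sq ((memLp_two_iff_integrable_sq hf.1).2 hsq)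
  calc ∫ ω, g ω ∂μ = ∫ ω, μ[g | m] ω ∂μ := (integral_condExp hm).symm
    _ ≤ ∫ ω, (f ω - c * f ω ^ 2) ∂μ := by
        refine integral_mono_ae integrable_condExp (hf.sub (hsq.const_mul c)) ?_
        filter_upwards [h] with ω hω
        linarith
    _ = ∫ ω, f ω ∂μ - c * ∫ ω, f ω ^ 2 ∂μ := by
        rw [integral_sub hf (hsq.const_mul c), integral_const_mul]
    _ ≤ ∫ ω, f ω ∂μ - c * (∫ ω, f ω ∂μ) ^ 2 := by gcongr

end Expectation

theorem drift_implies_expectation_decay_general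
    {Ω : Type*} {m : MeasurableSpace Ω} {μ : Measure Ω} [IsProbabilityMeasure μ]
    (ℱ : Filtration ℕ m) (X : ℕ → Ω → ℝ)
    (hint : ∀ s, Integrable (X s) μ)
    (hpos : ∀ s, ∀ᵐ ω ∂μ, 0 < X s ω)
    (c : ℝ) (hc : 0 < c)
    (hdrift : ∀ s, ∀ᵐ ω ∂μ, (μ[X (s + 1) | ℱ s]) ω - X s ω ≤ -c * (X s ω) ^ 2) :
    (∀ s : ℕ, (∫ ω, X s ω ∂μ) ≤ (∫ ω, X 0 ω ∂μ) / (1 + c * (∫ ω, X 0 ω ∂μ) * s)) ∧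
      ((∀ᵐ ω ∂μ, X 0 ω ≤ 1 / 2) →
        ∀ s : ℕ, (∫ ω, X s ω ∂μ) ≤ 1 / (2 + c * s)) := by
  have hmean_pos : ∀ s, 0 < ∫ ω, X s ω ∂μ := fun s ↦ integral_pos_of_ae_pos (hint s) (hpos s)
  have hmean_step : ∀ s, ∫ ω, X (s + 1) ω ∂μ ≤
      ∫ ω, X s ω ∂μ - c * (∫ ω, X s ω ∂μ) ^ 2 := fun s ↦
    integral_le_integral_sub_mul_sq_integral (ℱ.le s) hc (hint s) (hdrift s)
  refine ⟨le_div_one_add_mul_of_le_sub_mul_sq hc.le hmean_pos hmean_step, fun hhalf ↦ ?_⟩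
  have hmean_half : ∫ ω, X 0 ω ∂μ ≤ 1 / 2 := by
    simpa using integral_mono_ae (hint 0) (integrable_const (1 / 2 : ℝ)) hhalf
  exact le_one_div_add_mul_of_le_sub_mul_sq two_pos hc.le hmean_pos hmean_step hmean_half

/-- **Proposition (expectation decay under a quadratic drift).**
Let `(X_s)` be an integrable process adapted to a filtration `(F_s)` on a
probability space, with `X_s > 0` a.s. for every `s`, and suppose there is a
constant `c > 0` with `E[X_{s+1} | F_s] − X_s ≤ −c·X_s²` a.s. for every `s`.
Then `E[X_s] ≤ E[X_0]/(1 + c·E[X_0]·s)` for every `s`; in particular, if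
additionally `X_0 ≤ 1/2` a.s., then `E[X_s] ≤ 1/(2 + c·s)`. -/
theorem drift_implies_expectation_decay
    {Ω : Type*} {m : MeasurableSpace Ω} {μ : Measure Ω} [IsProbabilityMeasure μ]
    (ℱ : Filtration ℕ m) (X : ℕ → Ω → ℝ)
    (hadapt : ∀ s, StronglyMeasurable[ℱ s] (X s))
    (hint : ∀ s, Integrable (X s) μ)
    (hpos : ∀ s, ∀ᵐ ω ∂μ, 0 < X s ω)
    (c : ℝ) (hc : 0 < c)
    (hdrift : ∀ s, ∀ᵐ ω ∂μ, (μ[X (s + 1) | ℱ s]) ω - X s ω ≤ -c * (X s ω) ^ 2) :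
    (∀ s : ℕ, (∫ ω, X s ω ∂μ) ≤ (∫ ω, X 0 ω ∂μ) / (1 + c * (∫ ω, X 0 ω ∂μ) * s)) ∧
      ((∀ᵐ ω ∂μ, X 0 ω ≤ 1 / 2) →
        ∀ s : ℕ, (∫ ω, X s ω ∂μ) ≤ 1 / (2 + c * s)) :=
  drift_implies_expectation_decay_general ℱ X hint hpos c hc hdrift
end

section
/- Let (q̄(t))_{t ∈ ℕ} be a sequence of real numbers in the interval (0,1) such that q̄(t+1) − q̄(t) ≤ −η·q̄(t)² / (1 − log(θ·q̄(t))) for all t, where η > 0, θ > 0 and θ·q̄(0) ≤ 1. Then for every T with η·T/θ ≥ e, q̄(T) ≤ (1/(η·T))·log(η·T/θ). -/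
/-!
The potential `F(q) = log(θ q) / q` has derivative `(1 - log(θ q)) / q²`, so the recursion says
exactly that `F` drops by at least `η` along one step of the tangent line, and `F` lies below its
tangent lines wherever `log(θ q) ≤ 1`. Hence `F(q̄(T)) ≤ F(q̄(0)) - η T ≤ -η T`, and inverting
`F(x) ≤ -N` gives `x ≤ log(N/θ) / N` as soon as `N/θ ≥ e`: at `x = log(N/θ) / N` one has
`θ x = log s / s` with `s = N/θ`, whose logarithm `log log s - log s` is at least `-log s`.
-/

open Real

theorem log_mul_div_le_tangent {θ a b : ℝ} (hθ : 0 < θ) (ha : 0 < a) (hb : 0 < b)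
    (hθa : log (θ * a) ≤ 1) :
    log (θ * b) / b ≤ log (θ * a) / a + (1 - log (θ * a)) / a ^ 2 * (b - a) := by
  have hlog : log (θ * b) ≤ log (θ * a) + (b - a) / a := by
    have h := log_le_sub_one_of_pos (div_pos hb ha)
    rw [log_div hb.ne' ha.ne'] at h
    rw [log_mul hθ.ne' hb.ne', log_mul hθ.ne' ha.ne']
    rw [show (b - a) / a = b / a - 1 by field_simp]
    linarith
  have htangent : log (θ * a) + (b - a) / a
      ≤ (log (θ * a) / a + (1 - log (θ * a)) / a ^ 2 * (b - a)) * b := by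
    have expand : (log (θ * a) / a + (1 - log (θ * a)) / a ^ 2 * (b - a)) * b * a ^ 2
        - (log (θ * a) + (b - a) / a) * a ^ 2 = (1 - log (θ * a)) * (b - a) ^ 2 := by
      field_simp
      ring
    refine le_of_mul_le_mul_right ?_ (pow_pos ha 2)
    linarith [mul_nonneg (sub_nonneg.2 hθa) (sq_nonneg (b - a))]
  rw [div_le_iff₀ hb]
  exact hlog.trans htangent

section Recursion

variable {q : ℕ → ℝ} {η θ : ℝ}

theorem mul_le_one_of_log_recursion (hq : ∀ t, 0 < q t) (hη : 0 ≤ η) (hθ : 0 < θ)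
    (h0 : θ * q 0 ≤ 1)
    (hrec : ∀ t, q (t + 1) - q t ≤ -η * (q t) ^ 2 / (1 - log (θ * q t))) (t : ℕ) :
    θ * q t ≤ 1 := by
  induction t with
  | zero => exact h0
  | succ t ih =>
    have hden : 0 < 1 - log (θ * q t) := by
      linarith [log_nonpos (mul_pos hθ (hq t)).le ih]
    have hdecr : q (t + 1) ≤ q t := by
      have : -η * q t ^ 2 / (1 - log (θ * q t)) ≤ 0 :=
        div_nonpos_of_nonpos_of_nonneg (by nlinarith [sq_nonneg (q t)]) hden.le
      linarith [hrec t]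
    nlinarith

theorem log_mul_div_succ_le (hq : ∀ t, 0 < q t) (hθ : 0 < θ) (t : ℕ) (hθq : θ * q t ≤ 1)
    (hrec : q (t + 1) - q t ≤ -η * (q t) ^ 2 / (1 - log (θ * q t))) :
    log (θ * q (t + 1)) / q (t + 1) ≤ log (θ * q t) / q t - η := by
  have hL : log (θ * q t) ≤ 0 := log_nonpos (mul_pos hθ (hq t)).le hθq
  have hdrop : (1 - log (θ * q t)) / q t ^ 2 * (q (t + 1) - q t) ≤ -η := by
    rw [le_div_iff₀ (by linarith)] at hrec
    rw [div_mul_eq_mul_div, div_le_iff₀ (pow_pos (hq t) 2)]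
    linarith
  linarith [log_mul_div_le_tangent hθ (hq t) (hq (t + 1)) (by linarith)]

theorem log_mul_div_le_neg_mul (hq : ∀ t, 0 < q t) (hη : 0 ≤ η) (hθ : 0 < θ)
    (h0 : θ * q 0 ≤ 1)
    (hrec : ∀ t, q (t + 1) - q t ≤ -η * (q t) ^ 2 / (1 - log (θ * q t))) (T : ℕ) :
    log (θ * q T) / q T ≤ -(η * T) := by
  have hanti : Antitone fun t : ℕ => log (θ * q t) / q t + η * t :=
    antitone_nat_of_succ_le fun t => by
      have := log_mul_div_succ_le hq hθ t
        (mul_le_one_of_log_recursion hq hη hθ h0 hrec t) (hrec t)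
      push_cast
      linarith
  have hF0 : log (θ * q 0) / q 0 ≤ 0 :=
    div_nonpos_of_nonpos_of_nonneg (log_nonpos (mul_pos hθ (hq 0)).le h0) (hq 0).le
  have := hanti (Nat.zero_le T)
  simp only [Nat.cast_zero, mul_zero, add_zero] at this
  linarith

end Recursion

theorem le_log_div_of_log_mul_div_le {θ N x : ℝ} (hθ : 0 < θ) (hx : 0 < x)
    (hN : exp 1 ≤ N / θ) (h : log (θ * x) / x ≤ -N) :
    x ≤ (1 / N) * log (N / θ) := by
  set s := N / θ
  have hs : 0 < s := (exp_pos 1).trans_le hN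
  have hN0 : 0 < N := by simpa [s, div_pos_iff_of_pos_right hθ] using hs
  have hlogs : 1 ≤ log s := (le_log_iff_exp_le hs).2 hN
  set y := (1 / N) * log s
  have hθy : θ * y = log s / s := by
    simp only [y, s]
    field_simp
  have hy : 0 < y := by positivity
  by_contra! hxy
  have hhx : log (θ * x) ≤ -N * x := by rwa [div_le_iff₀ hx] at h
  have hNy : N * y = log s := by
    simp only [y]
    field_simp
  have : -log s < -log s := calc
    -log s ≤ log (log s) - log s := by linarith [log_nonneg hlogs]
    _ = log (θ * y) := by rw [hθy, log_div (by linarith) hs.ne']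
    _ < log (θ * x) := log_lt_log (by positivity) (by nlinarith)
    _ ≤ -N * x := hhx
    _ < -N * y := by nlinarith
    _ = -log s := by rw [neg_mul, hNy]
  exact lt_irrefl _ this

/-- **Lemma (discrete o.d.e. comparison with logarithmic factor).**
If `q̄(t) ∈ (0,1)` satisfies `q̄(t+1) − q̄(t) ≤ − η q̄(t)² / (1 − log(θ q̄(t)))`
with `η, θ > 0` and `θ q̄(0) ≤ 1`, then for every `T` with `η T / θ ≥ e`,
`q̄(T) ≤ (1/(ηT)) log(ηT/θ)`. -/
theorem samba_discrete_ode_log_bound (q : ℕ → ℝ)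
    (hq : ∀ t, q t ∈ Set.Ioo (0 : ℝ) 1)
    (η θ : ℝ) (hη : 0 < η) (hθ : 0 < θ) (h0 : θ * q 0 ≤ 1)
    (hrec : ∀ t, q (t + 1) - q t ≤ -η * (q t) ^ 2 / (1 - Real.log (θ * q t))) :
    ∀ T : ℕ, Real.exp 1 ≤ η * T / θ →
      q T ≤ (1 / (η * T)) * Real.log (η * T / θ) := by
  intro T hT
  have hpos : ∀ t, 0 < q t := fun t => (hq t).1
  exact le_log_div_of_log_mul_div_le hθ (hpos T) hT
    (log_mul_div_le_neg_mul hpos hη.le hθ h0 hrec T)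
end

section
/- Let (q̄(t))_{t ∈ ℕ} be a sequence of real numbers in the interval (0,1) such that q̄(t+1) − q̄(t) ≤ −η·q̄(t)² / log(e − log(θ·q̄(t))) for all t, where η > 0, θ > 0 and θ·q̄(0) ≤ 1. Then for every T with η·T/θ ≥ 1, q̄(T) ≤ (1/(η·T))·log( e + log(η·T/θ) ). -/
/-! A quadratic decrement `q (t+1) ≤ q t - c q t²` raises `1 / q` by at least `c` per step, so
`q T < 1 / (c T)`. Here `c = η / log(e - log(θ q t))`, and the logarithmic factor only stays
small while `q t` is large: if `q T` exceeded the claimed bound, then `q t ≥ q T ≥ 1 / (η T)` for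
all `t ≤ T` (the sequence is decreasing), which caps the factor by `M = log(e + log(η T / θ))` and
hence forces `q T < M / (η T)`, a contradiction. -/

open Real

theorem inv_add_le_inv_of_le_sub_mul_sq {a b c : ℝ} (ha : 0 < a) (hb : 0 < b) (hc : 0 ≤ c)
    (h : b ≤ a - c * a ^ 2) : a⁻¹ + c ≤ b⁻¹ := by
  rw [← one_div, ← one_div, div_add' _ _ _ ha.ne', div_le_div_iff₀ ha hb]
  nlinarith [mul_nonneg (mul_nonneg hc hc) (pow_nonneg ha.le 3)]

theorem inv_add_mul_le_inv_of_sq_decrement {q : ℕ → ℝ} {c : ℝ} {T : ℕ}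
    (hq : ∀ t ≤ T, 0 < q t) (hc : 0 ≤ c) (hstep : ∀ t < T, q (t + 1) ≤ q t - c * q t ^ 2) :
    (q 0)⁻¹ + T * c ≤ (q T)⁻¹ := by
  induction T with
  | zero => simp
  | succ T ih =>
    have hT := ih (fun t ht => hq t (by omega)) (fun t ht => hstep t (by omega))
    have hsucc := inv_add_le_inv_of_le_sub_mul_sq (hq T (by omega)) (hq (T + 1) le_rfl) hc
      (hstep T (by omega))
    push_cast
    linarith

theorem one_le_log_of_exp_one_le {y : ℝ} (hy : exp 1 ≤ y) : 1 ≤ log y :=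
  (le_log_iff_exp_le ((exp_pos 1).trans_le hy)).mpr hy

theorem one_le_log_exp_one_sub_log {x : ℝ} (hx0 : 0 ≤ x) (hx1 : x ≤ 1) :
    1 ≤ log (exp 1 - log x) :=
  one_le_log_of_exp_one_le (by linarith [log_nonpos hx0 hx1])

theorem log_exp_one_sub_log_le {x a : ℝ} (ha : 0 < a) (hax : a⁻¹ ≤ x) (hx1 : x ≤ 1) :
    log (exp 1 - log x) ≤ log (exp 1 + log a) := by
  have hlog : -log a ≤ log x := by
    simpa only [log_inv] using log_le_log (inv_pos.mpr ha) hax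
  have hx0 : 0 ≤ x := (inv_pos.mpr ha).le.trans hax
  exact log_le_log (by linarith [log_nonpos hx0 hx1, exp_pos 1]) (by linarith)

section LogLogRecursion

variable {q : ℕ → ℝ} {η θ : ℝ}

theorem succ_le_of_loglog_step (hq : ∀ t, 0 < q t) (hη : 0 ≤ η) (hθ : 0 < θ)
    (hrec : ∀ t, q (t + 1) - q t ≤ -η * q t ^ 2 / log (exp 1 - log (θ * q t)))
    {t : ℕ} (ht : θ * q t ≤ 1) : q (t + 1) ≤ q t := by
  have hL := one_le_log_exp_one_sub_log (mul_pos hθ (hq t)).le ht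
  have : -η * q t ^ 2 / log (exp 1 - log (θ * q t)) ≤ 0 :=
    div_nonpos_of_nonpos_of_nonneg (by nlinarith [sq_nonneg (q t)]) (by linarith)
  linarith [hrec t]

theorem mul_le_one_of_loglog_step (hq : ∀ t, 0 < q t) (hη : 0 ≤ η) (hθ : 0 < θ)
    (h0 : θ * q 0 ≤ 1)
    (hrec : ∀ t, q (t + 1) - q t ≤ -η * q t ^ 2 / log (exp 1 - log (θ * q t))) :
    ∀ t, θ * q t ≤ 1
  | 0 => h0
  | t + 1 => by
    have ht := mul_le_one_of_loglog_step hq hη hθ h0 hrec t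
    nlinarith [succ_le_of_loglog_step hq hη hθ hrec ht]

theorem antitone_of_loglog_step (hq : ∀ t, 0 < q t) (hη : 0 ≤ η) (hθ : 0 < θ)
    (h0 : θ * q 0 ≤ 1)
    (hrec : ∀ t, q (t + 1) - q t ≤ -η * q t ^ 2 / log (exp 1 - log (θ * q t))) :
    Antitone q :=
  antitone_nat_of_succ_le fun t =>
    succ_le_of_loglog_step hq hη hθ hrec (mul_le_one_of_loglog_step hq hη hθ h0 hrec t)

theorem le_sub_mul_sq_of_loglog_step (hq : ∀ t, 0 < q t) (hη : 0 ≤ η) (hθ : 0 < θ)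
    (h0 : θ * q 0 ≤ 1)
    (hrec : ∀ t, q (t + 1) - q t ≤ -η * q t ^ 2 / log (exp 1 - log (θ * q t)))
    {a : ℝ} (ha : 0 < a) {t : ℕ} (hat : a⁻¹ ≤ θ * q t) :
    q (t + 1) ≤ q t - η / log (exp 1 + log a) * q t ^ 2 := by
  have hθq := mul_le_one_of_loglog_step hq hη hθ h0 hrec t
  have hL := one_le_log_exp_one_sub_log (mul_pos hθ (hq t)).le hθq
  have hLM := log_exp_one_sub_log_le ha hat hθq
  have hcmp : η * q t ^ 2 / log (exp 1 + log a) ≤ η * q t ^ 2 / log (exp 1 - log (θ * q t)) :=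
    div_le_div_of_nonneg_left (by positivity) (by linarith) hLM
  have hrate : η / log (exp 1 + log a) * q t ^ 2 = η * q t ^ 2 / log (exp 1 + log a) := by ring
  have := hrec t
  rw [neg_mul, neg_div] at this
  linarith

end LogLogRecursion

/-- **Lemma (discrete o.d.e. comparison with iterated-logarithmic factor).**
If `q̄(t) ∈ (0,1)` satisfies
`q̄(t+1) − q̄(t) ≤ − η q̄(t)² / log(e − log(θ q̄(t)))`
with `η, θ > 0` and `θ q̄(0) ≤ 1`, then for every `T` with `η T / θ ≥ 1`,
`q̄(T) ≤ (1/(ηT)) log(e + log(ηT/θ))`. -/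
theorem samba_discrete_ode_loglog_bound (q : ℕ → ℝ)
    (hq : ∀ t, q t ∈ Set.Ioo (0 : ℝ) 1)
    (η θ : ℝ) (hη : 0 < η) (hθ : 0 < θ) (h0 : θ * q 0 ≤ 1)
    (hrec : ∀ t, q (t + 1) - q t ≤
      -η * (q t) ^ 2 / Real.log (Real.exp 1 - Real.log (θ * q t))) :
    ∀ T : ℕ, 1 ≤ η * T / θ →
      q T ≤ (1 / (η * T)) * Real.log (Real.exp 1 + Real.log (η * T / θ)) := by
  intro T hT
  have hpos : ∀ t, 0 < q t := fun t => (hq t).1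
  have hηT : 0 < η * T := by linarith [(one_le_div hθ).mp hT]
  set M := log (exp 1 + log (η * T / θ))
  have hM : 1 ≤ M := one_le_log_of_exp_one_le (by linarith [log_nonneg hT])
  by_contra! hcon
  have hlow : ∀ t ≤ T, (η * T / θ)⁻¹ ≤ θ * q t := by
    intro t ht
    have hqT : (η * T)⁻¹ ≤ q T := by
      rw [← one_div]; exact le_trans (le_mul_of_one_le_right (by positivity) hM) hcon.le
    rw [inv_div, div_eq_mul_inv]
    exact mul_le_mul_of_nonneg_left (hqT.trans (antitone_of_loglog_step hpos hη.le hθ h0 hrec ht))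
      hθ.le
  have hsum := inv_add_mul_le_inv_of_sq_decrement (fun t _ => hpos t)
    (div_nonneg hη.le (by linarith)) fun t ht =>
      le_sub_mul_sq_of_loglog_step hpos hη.le hθ h0 hrec (div_pos hηT hθ) (hlow t ht.le)
  have hrecip : T * (η / M) * q T < 1 := by
    have h := mul_lt_mul_of_pos_right
      ((lt_add_of_pos_left _ (inv_pos.mpr (hpos 0))).trans_le hsum) (hpos T)
    rwa [inv_mul_cancel₀ (hpos T).ne'] at h
  have hprod : η * T * q T < M := by
    have h : T * (η / M) * q T = η * T * q T / M := by ring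
    rwa [h, div_lt_one (by linarith)] at hrecip
  rw [one_div_mul_eq_div, div_lt_iff₀' hηT] at hcon
  linarith
end

section
/- The function γ(p) = p² / log(e − log p) is increasing and convex on the interval (0,1). -/
/-!
Put `U = a - log p` and `L = log U`, where `a ≥ 1`, so that `U > 1` and `L > 0` on `(0, 1)`.
The derivative of `p ^ 2 / L` is `p * (2 / L + 1 / (U * L ^ 2))`. It is nonnegative, and it is
monotone because `p` increases while `U` and `L` decrease as `p` does. Hence the function is
increasing and, having a monotone derivative, convex. The theorem is the case `a = e`.
-/

open Real Set

theorem convexOn_of_hasDerivAt_of_monotoneOn {D : Set ℝ} (hD : Convex ℝ D) (hD' : IsOpen D)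
    {f f' : ℝ → ℝ} (hf : ∀ x ∈ D, HasDerivAt f (f' x) x) (hf' : MonotoneOn f' D) :
    ConvexOn ℝ D f := by
  have hdiff : DifferentiableOn ℝ f D := fun x hx =>
    (hf x hx).differentiableAt.differentiableWithinAt
  refine MonotoneOn.convexOn_of_deriv hD hdiff.continuousOn ?_ ?_ <;> rw [hD'.interior_eq]
  · exact hdiff
  · exact hf'.congr fun x hx => (hf x hx).deriv.symm

section SqDivLogSubLog

variable {a p : ℝ}

noncomputable def sqDivLogSubLogDeriv (a p : ℝ) : ℝ :=
  p * (2 / log (a - log p) + 1 / ((a - log p) * log (a - log p) ^ 2))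

theorem one_lt_sub_log (ha : 1 ≤ a) (hp : p ∈ Ioo (0 : ℝ) 1) : 1 < a - log p := by
  linarith [log_neg hp.1 hp.2]

theorem log_sub_log_pos (ha : 1 ≤ a) (hp : p ∈ Ioo (0 : ℝ) 1) : 0 < log (a - log p) :=
  log_pos (one_lt_sub_log ha hp)

theorem hasDerivAt_sq_div_log_sub_log (ha : 1 ≤ a) (hp : p ∈ Ioo (0 : ℝ) 1) :
    HasDerivAt (fun x => x ^ 2 / log (a - log x)) (sqDivLogSubLogDeriv a p) p := by
  have hU := one_lt_sub_log ha hp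
  have hL := log_sub_log_pos ha hp
  have hlog : HasDerivAt (fun x => log (a - log x)) (-p⁻¹ / (a - log p)) p :=
    ((hasDerivAt_log hp.1.ne').const_sub a).log (by linarith)
  refine ((hasDerivAt_pow 2 p).div hlog hL.ne').congr_deriv ?_
  unfold sqDivLogSubLogDeriv
  field_simp
  ring

theorem sqDivLogSubLogDeriv_nonneg (ha : 1 ≤ a) (hp : p ∈ Ioo (0 : ℝ) 1) :
    0 ≤ sqDivLogSubLogDeriv a p := by
  have hU : 0 < a - log p := zero_lt_one.trans (one_lt_sub_log ha hp)
  have hL := log_sub_log_pos ha hp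
  have hp0 := hp.1
  unfold sqDivLogSubLogDeriv
  positivity

theorem monotoneOn_sqDivLogSubLogDeriv (ha : 1 ≤ a) :
    MonotoneOn (sqDivLogSubLogDeriv a) (Ioo 0 1) := by
  intro p hp q hq hpq
  have hUq : 0 < a - log q := zero_lt_one.trans (one_lt_sub_log ha hq)
  have hLq := log_sub_log_pos ha hq
  have hU : a - log q ≤ a - log p := by linarith [log_le_log hp.1 hpq]
  have hL : log (a - log q) ≤ log (a - log p) := log_le_log hUq hU
  have hUp : 0 < a - log p := hUq.trans_le hU
  have hLp := log_sub_log_pos ha hp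
  have hp0 := hp.1
  have hq0 := hq.1
  unfold sqDivLogSubLogDeriv
  gcongr

theorem monotoneOn_sq_div_log_sub_log (ha : 1 ≤ a) :
    MonotoneOn (fun p => p ^ 2 / log (a - log p)) (Ioo 0 1) := by
  have hf := fun p (hp : p ∈ Ioo (0 : ℝ) 1) => hasDerivAt_sq_div_log_sub_log ha hp
  refine monotoneOn_of_hasDerivWithinAt_nonneg (f' := sqDivLogSubLogDeriv a) (convex_Ioo 0 1)
    (fun p hp => (hf p hp).continuousAt.continuousWithinAt) ?_ ?_ <;> rw [interior_Ioo]
  · exact fun p hp => (hf p hp).hasDerivWithinAt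
  · exact fun p hp => sqDivLogSubLogDeriv_nonneg ha hp

theorem convexOn_sq_div_log_sub_log (ha : 1 ≤ a) :
    ConvexOn ℝ (Ioo 0 1) (fun p => p ^ 2 / log (a - log p)) :=
  convexOn_of_hasDerivAt_of_monotoneOn (convex_Ioo 0 1) isOpen_Ioo
    (fun _ hp => hasDerivAt_sq_div_log_sub_log ha hp) (monotoneOn_sqDivLogSubLogDeriv ha)

end SqDivLogSubLog

/-- **Lemma (learning-rate regularity, iterated logarithm).**
The step-size function `γ(p) = p² / log(e − log p)` is increasing and convex on `(0,1)`. -/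
theorem samba_gamma_loglog_increasing_convex :
    MonotoneOn (fun p : ℝ => p ^ 2 / Real.log (Real.exp 1 - Real.log p))
      (Set.Ioo (0 : ℝ) 1) ∧
    ConvexOn ℝ (Set.Ioo (0 : ℝ) 1)
      (fun p : ℝ => p ^ 2 / Real.log (Real.exp 1 - Real.log p)) :=
  have he : 1 ≤ exp 1 := one_le_exp zero_le_one
  ⟨monotoneOn_sq_div_log_sub_log he, convexOn_sq_div_log_sub_log he⟩
end

section
/- Let 𝒜 be a finite set, α ∈ (0,1), and let (p_a : a ∈ 𝒜) satisfy p_a > 0 for all a and Σ_a p_a = 1. Let a_• be an arm attaining the maximum of p_a, let p_• = max_a p_a, and let (I_a : a ∈ 𝒜) be indicator values in {0,1} with Σ_a I_a = 1 and (R_a : a ∈ 𝒜) values in {0,1}. Define the updated vector by p'_a = p_a + α·p_a²·[ I_a·R_a/p_a − I_{a_•}·R_{a_•}/p_• ] for all a ≠ a_•, and p'_{a_•} = 1 − Σ_{a ≠ a_•} p'_a. Then p'_a > 0 for all a ∈ 𝒜 and Σ_a p'_a = 1. -/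
/-! Write `c_a = I_a R_a ∈ [0, 1]`, so that `Σ_a c_a ≤ Σ_a I_a = 1` and, for `a ≠ a_•`,
`p'_a = p_a + α p_a c_a - α p_a² c_{a_•} / p_•`. The last term is at most `α p_a < p_a`
because `p_a ≤ p_•`, which makes `p'_a` positive. It is also nonnegative, so
`Σ_{a ≠ a_•} p'_a ≤ (1 - p_•) + α Σ_{a ≠ a_•} p_a c_a ≤ 1 - p_• + α p_• < 1`, i.e. `p'_{a_•} > 0`. -/

open Finset

lemma mem_Icc_zero_one_of_eq_zero_or_eq_one {R : Type*} [Zero R] [One R] [Preorder R]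
    [ZeroLEOneClass R] {x : R} (h : x = 0 ∨ x = 1) : x ∈ Set.Icc (0 : R) 1 := by
  rcases h with rfl | rfl
  · exact ⟨le_rfl, zero_le_one⟩
  · exact ⟨zero_le_one, le_rfl⟩

section SambaStep

variable {α x m u v : ℝ}

lemma samba_step_eq (hx : x ≠ 0) :
    x + α * x ^ 2 * (u / x - v / m) = x + α * x * u - α * x ^ 2 * v / m := by
  field_simp
  ring

lemma samba_step_pos (hα : α ∈ Set.Ioo (0 : ℝ) 1) (hx : 0 < x) (hxm : x ≤ m) (hu : 0 ≤ u)
    (hv : v ∈ Set.Icc (0 : ℝ) 1) : 0 < x + α * x ^ 2 * (u / x - v / m) := by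
  have hm : 0 < m := hx.trans_le hxm
  have hloss : α * x ^ 2 * v / m ≤ α * x := by
    rw [div_le_iff₀ hm]
    have : x * v ≤ m := by nlinarith [hv.1, hv.2]
    nlinarith [mul_le_mul_of_nonneg_left this (mul_nonneg hα.1.le hx.le)]
  rw [samba_step_eq hx.ne']
  nlinarith [mul_nonneg (mul_nonneg hα.1.le hx.le) hu, hα.2]

lemma samba_step_le (hα : 0 ≤ α) (hx : 0 < x) (hm : 0 ≤ m) (hv : 0 ≤ v) :
    x + α * x ^ 2 * (u / x - v / m) ≤ x + α * x * u := by
  rw [samba_step_eq hx.ne']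
  have : 0 ≤ α * x ^ 2 * v / m := by positivity
  linarith

end SambaStep

lemma sum_erase_lt_one_of_le_samba_bound {A : Type*} [Fintype A] [DecidableEq A] {α : ℝ}
    (hα : α ∈ Set.Ioo (0 : ℝ) 1) {p c q : A → ℝ} {astar : A} (hpsum : ∑ a, p a = 1)
    (hpstar : 0 < p astar) (hmax : ∀ a, p a ≤ p astar) (hc : ∀ a, 0 ≤ c a)
    (hcsum : ∑ a, c a ≤ 1) (hq : ∀ a, a ≠ astar → q a ≤ p a + α * p a * c a) :
    ∑ a ∈ univ.erase astar, q a < 1 := by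
  have hweighted : ∑ a ∈ univ.erase astar, p a * c a ≤ p astar :=
    calc ∑ a ∈ univ.erase astar, p a * c a
        ≤ ∑ a ∈ univ.erase astar, p astar * c a :=
          sum_le_sum fun a _ => mul_le_mul_of_nonneg_right (hmax a) (hc a)
      _ = p astar * ∑ a ∈ univ.erase astar, c a := (mul_sum _ _ _).symm
      _ ≤ p astar * 1 :=
          mul_le_mul_of_nonneg_left ((sum_le_univ_sum_of_nonneg hc).trans hcsum) hpstar.le
      _ = p astar := mul_one _
  calc ∑ a ∈ univ.erase astar, q a
      ≤ ∑ a ∈ univ.erase astar, (p a + α * (p a * c a)) :=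
        sum_le_sum fun a ha => (hq a (ne_of_mem_erase ha)).trans_eq (by ring)
    _ = (1 - p astar) + α * ∑ a ∈ univ.erase astar, p a * c a := by
        rw [sum_add_distrib, ← mul_sum, sum_erase_eq_sub (mem_univ _), hpsum]
    _ ≤ (1 - p astar) + α * p astar := by gcongr; exact hα.1.le
    _ < 1 := by nlinarith [hα.2]

/-- **Lemma (the SAMBA update preserves the interior of the simplex).**
Let `𝒜` be a finite set, `α ∈ (0,1)`, and `(p_a)` a positive probability
vector.  Let `a_•` attain the maximum of `p`, let `(I_a) ∈ {0,1}` with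
`Σ_a I_a = 1` and `(R_a) ∈ {0,1}`.  If `p'_a = p_a + α p_a² (I_a R_a/p_a −
I_{a_•} R_{a_•}/p_{a_•})` for `a ≠ a_•` and `p'_{a_•} = 1 − Σ_{a ≠ a_•} p'_a`,
then `p'` is again a positive probability vector. -/
theorem samba_update_preserves_simplex
    {A : Type*} [Fintype A] [DecidableEq A]
    (α : ℝ) (hα : α ∈ Set.Ioo (0 : ℝ) 1)
    (p : A → ℝ) (hppos : ∀ a, 0 < p a) (hpsum : ∑ a, p a = 1)
    (astar : A) (hastar : ∀ a, p a ≤ p astar)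
    (I R : A → ℝ)
    (hI : ∀ a, I a = 0 ∨ I a = 1) (hIsum : ∑ a, I a = 1)
    (hR : ∀ a, R a = 0 ∨ R a = 1)
    (p' : A → ℝ)
    (hupd : ∀ a, a ≠ astar →
      p' a = p a + α * (p a) ^ 2 * (I a * R a / p a - I astar * R astar / p astar))
    (hupd' : p' astar = 1 - ∑ a ∈ Finset.univ.erase astar, p' a) :
    (∀ a, 0 < p' a) ∧ ∑ a, p' a = 1 := by
  have hI01 a := mem_Icc_zero_one_of_eq_zero_or_eq_one (hI a)
  have hR01 a := mem_Icc_zero_one_of_eq_zero_or_eq_one (hR a)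
  have hIR01 a : I a * R a ∈ Set.Icc (0 : ℝ) 1 := unitInterval.mul_mem (hI01 a) (hR01 a)
  have hIRsum : ∑ a, I a * R a ≤ 1 :=
    hIsum ▸ sum_le_sum fun a _ => mul_le_of_le_one_right (hI01 a).1 (hR01 a).2
  have hrest : ∑ a ∈ univ.erase astar, p' a < 1 :=
    sum_erase_lt_one_of_le_samba_bound hα hpsum (hppos astar) hastar (fun a => (hIR01 a).1)
      hIRsum fun a ha => (hupd a ha).trans_le <|
        samba_step_le hα.1.le (hppos a) (hppos astar).le (hIR01 astar).1
  refine ⟨fun a => ?_, by rw [← add_sum_erase _ _ (mem_univ astar), hupd', sub_add_cancel]⟩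
  by_cases ha : a = astar
  · rw [ha, hupd']
    linarith
  · rw [hupd a ha]
    exact samba_step_pos hα (hppos a) (hastar a) (hIR01 a).1 (hIR01 astar)
end
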